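/- arXiv:1812.01310 — 3 statements merged into one kernel-verified Lean document; each statement's English description precedes it below -/
import Mathlib

section
/- Let 𝔤 be a finite-dimensional real nilpotent Lie algebra that admits a derivation D : 𝔤 → 𝔤 with tr(D) ≠ 0. Then 𝔤 carries no Einstein metric of nonzero scalar curvature: for every metric ⟨·,·⟩ on 𝔤 and every real number λ ≠ 0, the Ricci tensor ric of ⟨·,·⟩ is not equal to λ·⟨·,·⟩. -/
/-- The expression for the Ricci tensor of a metric `B` on a nilpotent Lie algebra,
computed from a basis `v` with metric-dual family `u`. -/
noncomputable def ricci {L : Type} [LieRing L] [LieAlgebra ℝ L] {ι : Type} [Fintype ι]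
    (B : LinearMap.BilinForm ℝ L) (v u : ι → L) (x y : L) : ℝ :=
  -(1 / 2 : ℝ) * ∑ i, B ⁅x, v i⁆ ⁅y, u i⁆
    + (1 / 4 : ℝ) * ∑ i, ∑ j, B ⁅v i, v j⁆ x * B ⁅u i, u j⁆ y

/-- `u` is the metric-dual family of `v` with respect to `B`: `B (v i) (u j) = δ_ij`. -/
def IsDualPair {L : Type} [LieRing L] [LieAlgebra ℝ L] {ι : Type} [Fintype ι]
    [DecidableEq ι] (B : LinearMap.BilinForm ℝ L) (v u : ι → L) : Prop :=
  ∀ i j, B (v i) (u j) = if i = j then (1 : ℝ) else 0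

/-! For a derivation `D` and a dual pair `(v, u)`, the sum `∑ₖ ric(D vₖ, uₖ) + ric(vₖ, D uₖ)`
vanishes. Contracting the quartic term of `ric(D vₖ, uₖ)` over `k` gives
`∑ ⟨[vᵢ, vⱼ], D[uᵢ, uⱼ]⟩`, which the Leibniz rule and antisymmetry turn into twice a quadratic
term; exchanging the roles of `v` and `u` (which leaves `ric` unchanged up to transposition,
`⟨·,·⟩` being symmetric) shows that the two halves of the sum cancel. For an Einstein metric the
same sum equals `2λ · tr D`. -/

namespace IsDualPair

variable {L : Type} [LieRing L] [LieAlgebra ℝ L] {ι : Type} [Fintype ι] [DecidableEq ι]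
  {B : LinearMap.BilinForm ℝ L} {u : ι → L}

theorem apply_eq_repr {v : Module.Basis ι ℝ L} (h : IsDualPair B (⇑v) u) (x : L) (k : ι) :
    B x (u k) = v.repr x k := by
  conv_lhs => rw [← v.sum_repr x]
  simp only [map_sum, map_smul, LinearMap.sum_apply, LinearMap.smul_apply, h _ _, smul_eq_mul,
    mul_ite, mul_one, mul_zero, Finset.sum_ite_eq', Finset.mem_univ, if_true]

theorem sum_apply_mul_apply {v : Module.Basis ι ℝ L} (h : IsDualPair B (⇑v) u)
    (f : L →ₗ[ℝ] ℝ) (x : L) : ∑ k, f (v k) * B x (u k) = f x := by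
  conv_rhs => rw [← v.sum_repr x]
  simp only [map_sum, map_smul, smul_eq_mul, h.apply_eq_repr, mul_comm]

theorem trace_eq_sum_left {v : Module.Basis ι ℝ L} (h : IsDualPair B (⇑v) u) (T : L →ₗ[ℝ] L) :
    LinearMap.trace ℝ L T = ∑ k, B (T (v k)) (u k) := by
  simp [LinearMap.trace_eq_matrix_trace ℝ v, Matrix.trace, LinearMap.toMatrix_apply,
    h.apply_eq_repr]

theorem linearIndependent {v : ι → L} (h : IsDualPair B v u) : LinearIndependent ℝ u := by
  refine Fintype.linearIndependent_iff.mpr fun c hc i => ?_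
  simpa [h _ _] using congrArg (B (v i)) hc

theorem symm {v : ι → L} (hsymm : ∀ x y, B x y = B y x) (h : IsDualPair B v u) :
    IsDualPair B u v := fun i j => by
  rw [hsymm, h j i]
  exact if_congr eq_comm rfl rfl

variable [FiniteDimensional ℝ L]

noncomputable def toBasis (v : Module.Basis ι ℝ L) (h : IsDualPair B (⇑v) u) :
    Module.Basis ι ℝ L :=
  basisOfLinearIndependentOfCardEqFinrank' u h.linearIndependent
    (Module.finrank_eq_card_basis v).symm

@[simp]
theorem coe_toBasis (v : Module.Basis ι ℝ L) (h : IsDualPair B (⇑v) u) :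
    ⇑(h.toBasis v) = u := by
  simp [toBasis, basisOfLinearIndependentOfCardEqFinrank']

theorem isDualPair_toBasis (hsymm : ∀ x y, B x y = B y x) {v : Module.Basis ι ℝ L}
    (h : IsDualPair B (⇑v) u) : IsDualPair B ⇑(h.toBasis v) ⇑v := by
  rw [coe_toBasis]
  exact h.symm hsymm

theorem trace_eq_sum_right (hsymm : ∀ x y, B x y = B y x) {v : Module.Basis ι ℝ L}
    (h : IsDualPair B (⇑v) u) (T : L →ₗ[ℝ] L) :
    LinearMap.trace ℝ L T = ∑ k, B (v k) (T (u k)) := by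
  simpa [hsymm (v _)] using (h.isDualPair_toBasis hsymm).trace_eq_sum_left T

end IsDualPair

section Ricci

variable {L : Type} [LieRing L] [LieAlgebra ℝ L] {ι : Type} [Fintype ι]
  {B : LinearMap.BilinForm ℝ L}

theorem ricci_comm (hsymm : ∀ x y, B x y = B y x) (v u : ι → L) (x y : L) :
    ricci B u v x y = ricci B v u y x := by
  simp only [ricci, hsymm ⁅x, _⁆, mul_comm (B ⁅u _, u _⁆ x)]

theorem sum_apply_derivation_lie (B : LinearMap.BilinForm ℝ L) (v u : ι → L) {D : L →ₗ[ℝ] L}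
    (hD : ∀ x y : L, D ⁅x, y⁆ = ⁅D x, y⁆ + ⁅x, D y⁆) :
    ∑ i, ∑ j, B ⁅v i, v j⁆ (D ⁅u i, u j⁆) = 2 * ∑ i, ∑ j, B ⁅v i, v j⁆ ⁅D (u i), u j⁆ := by
  have swap : ∑ i, ∑ j, B ⁅v i, v j⁆ ⁅u i, D (u j)⁆ = ∑ i, ∑ j, B ⁅v i, v j⁆ ⁅D (u i), u j⁆ := by
    rw [Finset.sum_comm]
    refine Finset.sum_congr rfl fun i _ => Finset.sum_congr rfl fun j _ => ?_
    rw [← lie_skew (v j), ← lie_skew (u j)]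
    simp only [map_neg, LinearMap.neg_apply, neg_neg]
  simp only [hD, map_add, Finset.sum_add_distrib, swap]
  ring

variable [DecidableEq ι] {D : L →ₗ[ℝ] L}

theorem IsDualPair.sum_ricci_derivation {v : Module.Basis ι ℝ L} {u : ι → L}
    (h : IsDualPair B (⇑v) u) (hD : ∀ x y : L, D ⁅x, y⁆ = ⁅D x, y⁆ + ⁅x, D y⁆) :
    ∑ k, ricci B (⇑v) u (D (v k)) (u k) =
      (∑ k, ∑ i, B ⁅v k, v i⁆ ⁅D (u k), u i⁆ - ∑ k, ∑ i, B ⁅D (v k), v i⁆ ⁅u k, u i⁆) / 2 := by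
  have contract : ∑ k, ∑ i, ∑ j, B ⁅v i, v j⁆ (D (v k)) * B ⁅u i, u j⁆ (u k) =
      ∑ i, ∑ j, B ⁅v i, v j⁆ (D ⁅u i, u j⁆) := by
    rw [Finset.sum_comm]
    refine Finset.sum_congr rfl fun i _ => ?_
    rw [Finset.sum_comm]
    exact Finset.sum_congr rfl fun j _ => h.sum_apply_mul_apply (B ⁅v i, v j⁆ ∘ₗ D) _
  simp only [ricci, Finset.sum_add_distrib, ← Finset.mul_sum, contract,
    sum_apply_derivation_lie B _ _ hD]
  ring

theorem IsDualPair.sum_ricci_derivation_add_eq_zero [FiniteDimensional ℝ L]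
    (hsymm : ∀ x y, B x y = B y x) {v : Module.Basis ι ℝ L} {u : ι → L}
    (h : IsDualPair B (⇑v) u) (hD : ∀ x y : L, D ⁅x, y⁆ = ⁅D x, y⁆ + ⁅x, D y⁆) :
    ∑ k, (ricci B (⇑v) u (D (v k)) (u k) + ricci B (⇑v) u (v k) (D (u k))) = 0 := by
  have dual_side := (h.isDualPair_toBasis hsymm).sum_ricci_derivation hD
  rw [IsDualPair.coe_toBasis] at dual_side
  have sym_sum : ∀ a b c d : ι → L,
      ∑ k, ∑ i, B ⁅a k, b i⁆ ⁅c k, d i⁆ = ∑ k, ∑ i, B ⁅c k, d i⁆ ⁅a k, b i⁆ :=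
    fun _ _ _ _ => Finset.sum_congr rfl fun _ _ => Finset.sum_congr rfl fun _ _ => hsymm _ _
  have swap (k : ι) : ricci B (⇑v) u (v k) (D (u k)) = ricci B u (⇑v) (D (u k)) (v k) :=
    (ricci_comm hsymm (⇑v) u _ _).symm
  simp only [Finset.sum_add_distrib, swap, dual_side, h.sum_ricci_derivation hD,
    sym_sum (fun k => D (u k)), sym_sum u]
  ring

end Ricci

theorem no_einstein_of_derivation_nonzero_trace_general {L : Type} [LieRing L] [LieAlgebra ℝ L]
    [FiniteDimensional ℝ L]
    (D : L →ₗ[ℝ] L) (hD : ∀ x y : L, D ⁅x, y⁆ = ⁅D x, y⁆ + ⁅x, D y⁆)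
    (htr : LinearMap.trace ℝ L D ≠ 0)
    (B : LinearMap.BilinForm ℝ L)
    (hsymm : ∀ x y, B x y = B y x)
    (lam : ℝ) (hlam : lam ≠ 0)
    (ι : Type) [Fintype ι] [DecidableEq ι] (v : Module.Basis ι ℝ L) (u : ι → L)
    (hdual : IsDualPair B (⇑v) u) :
    ¬ ∀ x y, ricci B (⇑v) u x y = lam * B x y := by
  intro hE
  have einstein_sum :
      ∑ k, (ricci B (⇑v) u (D (v k)) (u k) + ricci B (⇑v) u (v k) (D (u k))) =
        2 * lam * LinearMap.trace ℝ L D := by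
    simp only [hE, Finset.sum_add_distrib, ← Finset.mul_sum, ← hdual.trace_eq_sum_left,
      ← hdual.trace_eq_sum_right hsymm]
    ring
  rw [hdual.sum_ricci_derivation_add_eq_zero hsymm hD] at einstein_sum
  exact htr ((mul_eq_zero.mp einstein_sum.symm).resolve_left (mul_ne_zero two_ne_zero hlam))

/-- A nilpotent Lie algebra admitting a derivation of nonzero trace carries no Einstein
metric of nonzero scalar curvature. -/
theorem no_einstein_of_derivation_nonzero_trace {L : Type} [LieRing L] [LieAlgebra ℝ L]
    [FiniteDimensional ℝ L] [LieRing.IsNilpotent L]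
    (D : L →ₗ[ℝ] L) (hD : ∀ x y : L, D ⁅x, y⁆ = ⁅D x, y⁆ + ⁅x, D y⁆)
    (htr : LinearMap.trace ℝ L D ≠ 0)
    (B : LinearMap.BilinForm ℝ L)
    (hsymm : ∀ x y, B x y = B y x)
    (hnondeg : ∀ x, (∀ y, B x y = 0) → x = 0)
    (lam : ℝ) (hlam : lam ≠ 0)
    (ι : Type) [Fintype ι] [DecidableEq ι] (v : Module.Basis ι ℝ L) (u : ι → L)
    (hdual : IsDualPair B (⇑v) u) :
    ¬ ∀ x y, ricci B (⇑v) u x y = lam * B x y :=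
  no_einstein_of_derivation_nonzero_trace_general D hD htr B hsymm lam hlam ι v u hdual
end

section
/- Let 𝔤 be the 6-dimensional real nilpotent Lie algebra with basis e_1,…,e_6 whose only nonzero brackets among basis vectors are [e_1,e_2] = e_4, [e_1,e_3] = e_5, [e_2,e_5] = e_6, [e_3,e_4] = e_6 (this bracket satisfies the Jacobi identity). Then for all nonzero real numbers g_1, g_2, g_3, x, the diagonal metric with diagonal entries (g_1, g_2, g_3, x·g_1·g_2, −x·g_1·g_3, x²·g_1·g_2·g_3) is Ricci-flat. In particular, 𝔤 admits a Ricci-flat metric of every signature (p,q) with p + q = 6 and p, q ≥ 1. -/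
/-- `B` is Ricci-flat: the Ricci tensor vanishes (computed from any basis and
metric-dual family). -/
def RicciFlat {L : Type} [LieRing L] [LieAlgebra ℝ L]
    (B : LinearMap.BilinForm ℝ L) : Prop :=
  ∀ (ι : Type) [Fintype ι] [DecidableEq ι] (v : Module.Basis ι ℝ L) (u : ι → L),
    IsDualPair B (⇑v) u → ∀ x y, ricci B (⇑v) u x y = 0

/-- `B` has signature `(p, q)`: `p` and `q` are the dimensions of maximal positive- and
negative-definite subspaces. -/
def IsSignature {L : Type} [AddCommGroup L] [Module ℝ L]
    (B : LinearMap.BilinForm ℝ L) (p q : ℕ) : Prop :=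
  ((∃ P : Submodule ℝ L, Module.finrank ℝ P = p ∧ ∀ x ∈ P, x ≠ 0 → 0 < B x x) ∧
    ∀ P : Submodule ℝ L, (∀ x ∈ P, x ≠ 0 → 0 < B x x) → Module.finrank ℝ P ≤ p) ∧
  ((∃ N : Submodule ℝ L, Module.finrank ℝ N = q ∧ ∀ x ∈ N, x ≠ 0 → B x x < 0) ∧
    ∀ N : Submodule ℝ L, (∀ x ∈ N, x ≠ 0 → B x x < 0) → Module.finrank ℝ N ≤ q)

/-!
The expression defining `ricci` is the same for every basis `v` and dual family `u`: each of its
sums is a contraction `∑ i, F (v i) (u i)` of a bilinear map `F`, and such a contraction does not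
depend on the dual pair. For a diagonal metric with weights `g` we may therefore use the basis `e`
itself with dual family `(g k)⁻¹ • e k`; then `ric (e p) (e q)` is a rational expression in the
weights and the structure constants, which vanishes identically for the weights
`(g₁, g₂, g₃, x g₁ g₂, -x g₁ g₃, x² g₁ g₂ g₃)`. By Sylvester's law of inertia a diagonal metric
has as many positive (negative) directions as positive (negative) weights, and choosing
`g₁, g₂, g₃, x = ±1` suitably realises every signature `(p, q)` with `p, q ≥ 1`.
-/

open Module

section DualPair

variable {L : Type} [LieRing L] [LieAlgebra ℝ L] {B : LinearMap.BilinForm ℝ L}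
  {ι ι' : Type} [Fintype ι] [DecidableEq ι] [Fintype ι'] [DecidableEq ι']
  {v : Basis ι ℝ L} {u : ι → L} {v' : Basis ι' ℝ L} {u' : ι' → L}

namespace IsDualPair

theorem repr_apply (h : IsDualPair B v u) (z : L) (i : ι) : v.repr z i = B z (u i) := by
  conv_rhs => rw [← v.sum_repr z]
  simp only [map_sum, map_smul, LinearMap.sum_apply, LinearMap.smul_apply, h _ _, smul_eq_mul,
    mul_ite, mul_one, mul_zero, Finset.sum_ite_eq', Finset.mem_univ, if_true]

theorem sum_smul_eq (h : IsDualPair B v u) (z : L) : ∑ k, B (v k) z • u k = z := by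
  have : FiniteDimensional ℝ L := v.finiteDimensional_of_finite
  let Φ : L →ₗ[ℝ] ι → ℝ := LinearMap.pi fun k => B (v k)
  have hΦ : ∀ c : ι → ℝ, Φ (∑ i, c i • u i) = c := fun c => by ext k; simp [Φ, h _ _]
  -- `Φ` is onto `ι → ℝ`, a space of the same dimension as `L`, hence injective
  have hinj : Function.Injective Φ :=
    (LinearMap.injective_iff_surjective_of_finrank_eq_finrank
      (by simp [finrank_eq_card_basis v])).2 fun c => ⟨_, hΦ c⟩
  exact hinj (by rw [hΦ]; rfl)

theorem sum_apply_eq (h : IsDualPair B v u) (h' : IsDualPair B v' u')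
    (F : L →ₗ[ℝ] L →ₗ[ℝ] ℝ) : ∑ i, F (v i) (u i) = ∑ k, F (v' k) (u' k) := by
  have hu' : ∀ k, ∑ i, v'.repr (v i) k • u i = u' k := fun k => by
    simp_rw [h'.repr_apply]
    exact h.sum_smul_eq (u' k)
  calc ∑ i, F (v i) (u i) = ∑ i, ∑ k, v'.repr (v i) k * F (v' k) (u i) := by
        refine Finset.sum_congr rfl fun i _ => ?_
        conv_lhs => rw [← v'.sum_repr (v i)]
        simp only [map_sum, map_smul, LinearMap.sum_apply, LinearMap.smul_apply, smul_eq_mul]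
    _ = ∑ k, F (v' k) (∑ i, v'.repr (v i) k • u i) := by
        rw [Finset.sum_comm]
        simp [map_sum]
    _ = ∑ k, F (v' k) (u' k) := by simp_rw [hu']

end IsDualPair

theorem ricci_eq_of_isDualPair (h : IsDualPair B v u) (h' : IsDualPair B v' u') (x y : L) :
    ricci B v u x y = ricci B v' u' x y := by
  have first : ∑ i, B ⁅x, v i⁆ ⁅y, u i⁆ = ∑ k, B ⁅x, v' k⁆ ⁅y, u' k⁆ := by
    simpa using h.sum_apply_eq h' (B.compl₁₂ (LieAlgebra.ad ℝ L x) (LieAlgebra.ad ℝ L y))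
  let T (a b c d : L) : ℝ := B ⁅a, b⁆ x * B ⁅c, d⁆ y
  have inner (a c : L) : ∑ j, T a (v j) c (u j) = ∑ l, T a (v' l) c (u' l) := by
    simpa [T] using h.sum_apply_eq h' ((LinearMap.mul ℝ ℝ).compl₁₂
      (B.flip x ∘ₗ LieAlgebra.ad ℝ L a) (B.flip y ∘ₗ LieAlgebra.ad ℝ L c))
  have swap (a b c d : L) : T a b c d = T b a d c := by
    simp only [T, ← lie_skew b a, ← lie_skew d c, map_neg, LinearMap.neg_apply, neg_mul_neg]
  have second : ∑ i, ∑ j, T (v i) (v j) (u i) (u j)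
      = ∑ k, ∑ l, T (v' k) (v' l) (u' k) (u' l) := by
    calc _ = ∑ i, ∑ l, T (v i) (v' l) (u i) (u' l) := by simp_rw [inner]
      _ = ∑ l, ∑ i, T (v' l) (v i) (u' l) (u i) := by rw [Finset.sum_comm]; simp_rw [swap (v _)]
      _ = ∑ l, ∑ k, T (v' l) (v' k) (u' l) (u' k) := by simp_rw [inner]
      _ = _ := by rw [Finset.sum_comm]
  simp only [ricci, first]
  exact congrArg (_ + 1 / 4 * ·) second

end DualPair

theorem ricci_eq_zero_of_basis {L : Type} [LieRing L] [LieAlgebra ℝ L]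
    {B : LinearMap.BilinForm ℝ L} {ι κ : Type} [Fintype ι] {v u : ι → L} (e : Basis κ ℝ L)
    (h : ∀ p q, ricci B v u (e p) (e q) = 0) (x y : L) : ricci B v u x y = 0 := by
  let R : LinearMap.BilinForm ℝ L := LinearMap.mk₂ ℝ (ricci B v u)
    (fun _ _ _ => by simp only [ricci, add_lie, map_add, LinearMap.add_apply,
      Finset.sum_add_distrib, add_mul]; ring)
    (fun c _ _ => by simp only [ricci, smul_lie, map_smul, LinearMap.smul_apply, smul_eq_mul,
      mul_assoc, ← Finset.mul_sum]; ring)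
    (fun _ _ _ => by simp only [ricci, add_lie, map_add, Finset.sum_add_distrib, mul_add]; ring)
    (fun c _ _ => by simp only [ricci, smul_lie, map_smul, smul_eq_mul, mul_left_comm _ c,
      ← Finset.mul_sum]; ring)
  have hR : R = 0 := LinearMap.ext_basis e e h
  exact LinearMap.congr_fun₂ hR x y

section Diagonal

variable {L : Type} [AddCommGroup L] [Module ℝ L] {ι : Type} [Fintype ι]

noncomputable def diagonalForm (e : Basis ι ℝ L) (w : ι → ℝ) : LinearMap.BilinForm ℝ L :=
  ∑ i, w i • (LinearMap.mul ℝ ℝ).compl₁₂ (e.coord i) (e.coord i)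

variable (e : Basis ι ℝ L) (w : ι → ℝ)

theorem diagonalForm_apply (a b : L) :
    diagonalForm e w a b = ∑ i, w i * e.repr a i * e.repr b i := by
  simp [diagonalForm, mul_assoc]

theorem diagonalForm_comm (a b : L) : diagonalForm e w a b = diagonalForm e w b a := by
  simp only [diagonalForm_apply, mul_right_comm]

theorem basisRepr_toQuadraticMap_diagonalForm :
    (diagonalForm e w).toQuadraticMap.basisRepr e = QuadraticMap.weightedSumSquares ℝ w := by
  ext c
  rw [QuadraticMap.basisRepr_apply, LinearMap.BilinMap.toQuadraticMap_apply, diagonalForm_apply,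
    QuadraticMap.weightedSumSquares_apply, e.repr_sum_self]
  simp only [smul_eq_mul, mul_assoc]

variable [DecidableEq ι]

theorem diagonalForm_apply_basis_right (a : L) (j : ι) :
    diagonalForm e w a (e j) = w j * e.repr a j := by
  simp [diagonalForm_apply, Finsupp.single_apply]

theorem diagonalForm_apply_basis (i j : ι) :
    diagonalForm e w (e i) (e j) = if i = j then w i else 0 := by
  rw [diagonalForm_apply_basis_right, e.repr_self, Finsupp.single_apply]
  split_ifs with h <;> simp [h]

theorem diagonalForm_separatingLeft (hw : ∀ i, w i ≠ 0) : (diagonalForm e w).SeparatingLeft :=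
  fun a ha => e.ext_elem fun j => by
    simpa [diagonalForm_apply_basis_right, hw j] using ha (e j)

theorem eq_diagonalForm {B : LinearMap.BilinForm ℝ L}
    (hB : ∀ i j, B (e i) (e j) = if i = j then w i else 0) : B = diagonalForm e w :=
  LinearMap.ext_basis e e fun i j => by rw [hB, diagonalForm_apply_basis]

end Diagonal

theorem isSignature_sigPos_sigNeg {L : Type} [AddCommGroup L] [Module ℝ L]
    [FiniteDimensional ℝ L] (B : LinearMap.BilinForm ℝ L) :
    IsSignature B (sigPos B.toQuadraticMap) (sigNeg B.toQuadraticMap) := by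
  have hpos := sigPos_isGreatest B.toQuadraticMap
  have hneg := sigNeg_isGreatest B.toQuadraticMap
  simp only [IsGreatest, upperBounds, QuadraticMap.PosDef] at hpos hneg
  simp only [ne_eq, QuadraticMap.restrict_apply, LinearMap.BilinMap.toQuadraticMap_apply,
    Subtype.forall, Submodule.mk_eq_zero, Set.mem_ofPred_eq, forall_exists_index, and_imp,
    neg_apply, Left.neg_pos_iff, IsSignature] at hpos hneg ⊢
  exact ⟨⟨hpos.1, fun P hP => hpos.2 P rfl hP⟩, ⟨hneg.1, fun N hN => hneg.2 N rfl hN⟩⟩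

theorem diagonalForm_isSignature {L : Type} [AddCommGroup L] [Module ℝ L] {ι : Type} [Fintype ι]
    (e : Basis ι ℝ L) (w : ι → ℝ) :
    IsSignature (diagonalForm e w) {i | 0 < w i}.ncard {i | w i < 0}.ncard := by
  have : FiniteDimensional ℝ L := e.finiteDimensional_of_finite
  have hQ : (diagonalForm e w).toQuadraticMap.Equivalent (QuadraticMap.weightedSumSquares ℝ w) :=
    basisRepr_toQuadraticMap_diagonalForm e w ▸ ⟨QuadraticMap.isometryEquivBasisRepr _ e⟩
  rw [← QuadraticForm.sigPos_of_equiv_weightedSumSquares hQ,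
    ← QuadraticForm.sigNeg_of_equiv_weightedSumSquares hQ]
  exact isSignature_sigPos_sigNeg _

/-- The Ricci tensor of an orthogonal basis with `⟨e k, e k⟩ = g k` and structure constants
`⁅e i, e j⁆ = ∑ k, c i j k • e k`. -/
noncomputable def ricciOfStructureConstants {ι : Type} [Fintype ι] (c : ι → ι → ι → ℝ)
    (g : ι → ℝ) (p q : ι) : ℝ :=
  -(1 / 2) * ∑ k, ∑ m, (g k)⁻¹ * g m * c p k m * c q k m
    + (1 / 4) * ∑ i, ∑ j, (g i)⁻¹ * (g j)⁻¹ * (g p * c i j p) * (g q * c i j q)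

section LieDiagonal

variable {L : Type} [LieRing L] [LieAlgebra ℝ L] {ι : Type} [Fintype ι] [DecidableEq ι]
  (e : Basis ι ℝ L)

theorem isDualPair_diagonalForm {g : ι → ℝ} (hg : ∀ i, g i ≠ 0) :
    IsDualPair (diagonalForm e g) e fun k => (g k)⁻¹ • e k := fun i j => by
  rw [map_smul, smul_eq_mul, diagonalForm_apply_basis]
  split_ifs with h
  · rw [h, inv_mul_cancel₀ (hg j)]
  · rw [mul_zero]

theorem ricci_diagonalForm_basis (g : ι → ℝ) (p q : ι) :
    ricci (diagonalForm e g) e (fun k => (g k)⁻¹ • e k) (e p) (e q)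
      = ricciOfStructureConstants (fun i j k => e.repr ⁅e i, e j⁆ k) g p q := by
  simp only [ricci, ricciOfStructureConstants, lie_smul, smul_lie, map_smul,
    LinearMap.smul_apply, smul_eq_mul, diagonalForm_apply_basis_right]
  simp only [diagonalForm_apply, Finset.mul_sum]
  congr 1 <;> exact Finset.sum_congr rfl fun _ _ => Finset.sum_congr rfl fun _ _ => by ring

end LieDiagonal

section Algebra631

def brackets631 : List (Fin 6 × Fin 6 × Fin 6) := [(0, 1, 3), (0, 2, 4), (1, 4, 5), (2, 3, 5)]

def structureConstants631 (i j k : Fin 6) : ℝ :=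
  if (i, j, k) ∈ brackets631 then 1 else if (j, i, k) ∈ brackets631 then -1 else 0

def weights631 (g₁ g₂ g₃ x : ℝ) : Fin 6 → ℝ :=
  ![g₁, g₂, g₃, x * g₁ * g₂, -(x * g₁ * g₃), x ^ 2 * g₁ * g₂ * g₃]

variable {g₁ g₂ g₃ x : ℝ}

theorem weights631_ne_zero (hg₁ : g₁ ≠ 0) (hg₂ : g₂ ≠ 0) (hg₃ : g₃ ≠ 0) (hx : x ≠ 0) (i : Fin 6) :
    weights631 g₁ g₂ g₃ x i ≠ 0 := by
  fin_cases i <;> simp [weights631, *]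

set_option maxHeartbeats 1000000 in
theorem ricciOfStructureConstants_631_eq_zero (hg₁ : g₁ ≠ 0) (hg₂ : g₂ ≠ 0) (hg₃ : g₃ ≠ 0)
    (p q : Fin 6) :
    ricciOfStructureConstants structureConstants631 (weights631 g₁ g₂ g₃ x) p q = 0 := by
  fin_cases p <;> fin_cases q <;>
  · simp +decide only [Fin.zero_eta, Fin.mk_one, Fin.reduceFinMk, ricciOfStructureConstants,
      Fin.sum_univ_six, structureConstants631, brackets631, weights631, ite_true, ite_false,
      mul_zero, zero_mul, add_zero, zero_add, mul_one, mul_neg, neg_neg, Matrix.cons_val]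
    try field_simp
    try ring

theorem repr_lie_basis_631 {L : Type} [LieRing L] [LieAlgebra ℝ L] (e : Basis (Fin 6) ℝ L)
    (h01 : ⁅e 0, e 1⁆ = e 3) (h02 : ⁅e 0, e 2⁆ = e 4)
    (h14 : ⁅e 1, e 4⁆ = e 5) (h23 : ⁅e 2, e 3⁆ = e 5)
    (hzero : ∀ i j : Fin 6,
      (i, j) ∉ ([(0, 1), (0, 2), (1, 4), (2, 3)] : List (Fin 6 × Fin 6)) →
      (j, i) ∉ ([(0, 1), (0, 2), (1, 4), (2, 3)] : List (Fin 6 × Fin 6)) →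
      ⁅e i, e j⁆ = 0) (i j k : Fin 6) :
    e.repr ⁅e i, e j⁆ k = structureConstants631 i j k := by
  have h10 : ⁅e 1, e 0⁆ = -e 3 := by rw [← lie_skew, h01]
  have h20 : ⁅e 2, e 0⁆ = -e 4 := by rw [← lie_skew, h02]
  have h41 : ⁅e 4, e 1⁆ = -e 5 := by rw [← lie_skew, h14]
  have h32 : ⁅e 3, e 2⁆ = -e 5 := by rw [← lie_skew, h23]
  fin_cases i <;> fin_cases j <;> fin_cases k <;>
    simp +decide [structureConstants631, h01, h02, h14, h23, h10, h20, h41, h32, hzero]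

theorem ricciFlat_diagonalForm_631 {L : Type} [LieRing L] [LieAlgebra ℝ L]
    (e : Basis (Fin 6) ℝ L) (hc : ∀ i j k, e.repr ⁅e i, e j⁆ k = structureConstants631 i j k)
    (hg₁ : g₁ ≠ 0) (hg₂ : g₂ ≠ 0) (hg₃ : g₃ ≠ 0) (hx : x ≠ 0) :
    RicciFlat (diagonalForm e (weights631 g₁ g₂ g₃ x)) := by
  intro ι _ _ v u huv a b
  rw [ricci_eq_of_isDualPair huv (isDualPair_diagonalForm e (weights631_ne_zero hg₁ hg₂ hg₃ hx))]
  apply ricci_eq_zero_of_basis e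
  intro p q
  simp only [ricci_diagonalForm_basis, hc]
  exact ricciOfStructureConstants_631_eq_zero hg₁ hg₂ hg₃ p q

theorem exists_weights631_signature (p q : ℕ) (hpq : p + q = 6) (hp : 1 ≤ p) (hq : 1 ≤ q) :
    ∃ g₁ g₂ g₃ x : ℝ, g₁ ≠ 0 ∧ g₂ ≠ 0 ∧ g₃ ≠ 0 ∧ x ≠ 0 ∧
      {i | 0 < weights631 g₁ g₂ g₃ x i}.ncard = p ∧
      {i | weights631 g₁ g₂ g₃ x i < 0}.ncard = q := by
  obtain rfl : p = 6 - q := by omega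
  have : q ≤ 5 := by omega
  interval_cases q
    <;> [refine ⟨1, 1, 1, 1, ?_⟩; refine ⟨1, 1, -1, 1, ?_⟩; refine ⟨-1, 1, 1, 1, ?_⟩;
      refine ⟨1, -1, 1, 1, ?_⟩; refine ⟨-1, -1, -1, -1, ?_⟩]
    <;> · simp only [Set.ncard_eq_toFinset_card', Set.toFinset_ofPred, Finset.card_filter,
            Fin.sum_univ_six, weights631]
          simp only [Matrix.cons_val]
          norm_num

end Algebra631

theorem ricci_flat_diagonal_631_6_general {L : Type} [LieRing L] [LieAlgebra ℝ L]
    (e : Module.Basis (Fin 6) ℝ L)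
    (h01 : ⁅e 0, e 1⁆ = e 3) (h02 : ⁅e 0, e 2⁆ = e 4)
    (h14 : ⁅e 1, e 4⁆ = e 5) (h23 : ⁅e 2, e 3⁆ = e 5)
    (hzero : ∀ i j : Fin 6,
      (i, j) ∉ ([(0, 1), (0, 2), (1, 4), (2, 3)] : List (Fin 6 × Fin 6)) →
      (j, i) ∉ ([(0, 1), (0, 2), (1, 4), (2, 3)] : List (Fin 6 × Fin 6)) →
      ⁅e i, e j⁆ = 0) :
    (∀ g₁ g₂ g₃ x : ℝ, g₁ ≠ 0 → g₂ ≠ 0 → g₃ ≠ 0 → x ≠ 0 →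
      ∀ B : LinearMap.BilinForm ℝ L,
        (∀ i j, B (e i) (e j) = if i = j then
          ![g₁, g₂, g₃, x * g₁ * g₂, -(x * g₁ * g₃), x ^ 2 * g₁ * g₂ * g₃] i else 0) →
        RicciFlat B) ∧
    (∀ p q : ℕ, p + q = 6 → 1 ≤ p → 1 ≤ q →
      ∃ B : LinearMap.BilinForm ℝ L, (∀ x y, B x y = B y x) ∧
        (∀ x, (∀ y, B x y = 0) → x = 0) ∧ RicciFlat B ∧ IsSignature B p q) := by
  have hc := repr_lie_basis_631 e h01 h02 h14 h23 hzero
  refine ⟨fun g₁ g₂ g₃ x hg₁ hg₂ hg₃ hx B hB => ?_, fun p q hpq hp hq => ?_⟩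
  · rw [eq_diagonalForm e (weights631 g₁ g₂ g₃ x) hB]
    exact ricciFlat_diagonalForm_631 e hc hg₁ hg₂ hg₃ hx
  · obtain ⟨g₁, g₂, g₃, x, hg₁, hg₂, hg₃, hx, rfl, rfl⟩ :=
      exists_weights631_signature p q hpq hp hq
    exact ⟨diagonalForm e _, diagonalForm_comm e _,
      diagonalForm_separatingLeft e _ (weights631_ne_zero hg₁ hg₂ hg₃ hx),
      ricciFlat_diagonalForm_631 e hc hg₁ hg₂ hg₃ hx, diagonalForm_isSignature e _⟩

/-- On the 6-dimensional nilpotent Lie algebra `631:6`, the displayed diagonal metrics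
are Ricci-flat; in particular there are Ricci-flat metrics of every indefinite
signature `(p, q)` with `p + q = 6`. -/
theorem ricci_flat_diagonal_631_6 {L : Type} [LieRing L] [LieAlgebra ℝ L]
    [LieRing.IsNilpotent L]
    (e : Module.Basis (Fin 6) ℝ L)
    (h01 : ⁅e 0, e 1⁆ = e 3) (h02 : ⁅e 0, e 2⁆ = e 4)
    (h14 : ⁅e 1, e 4⁆ = e 5) (h23 : ⁅e 2, e 3⁆ = e 5)
    (hzero : ∀ i j : Fin 6,
      (i, j) ∉ ([(0, 1), (0, 2), (1, 4), (2, 3)] : List (Fin 6 × Fin 6)) →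
      (j, i) ∉ ([(0, 1), (0, 2), (1, 4), (2, 3)] : List (Fin 6 × Fin 6)) →
      ⁅e i, e j⁆ = 0) :
    (∀ g₁ g₂ g₃ x : ℝ, g₁ ≠ 0 → g₂ ≠ 0 → g₃ ≠ 0 → x ≠ 0 →
      ∀ B : LinearMap.BilinForm ℝ L,
        (∀ i j, B (e i) (e j) = if i = j then
          ![g₁, g₂, g₃, x * g₁ * g₂, -(x * g₁ * g₃), x ^ 2 * g₁ * g₂ * g₃] i else 0) →
        RicciFlat B) ∧
    (∀ p q : ℕ, p + q = 6 → 1 ≤ p → 1 ≤ q →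
      ∃ B : LinearMap.BilinForm ℝ L, (∀ x y, B x y = B y x) ∧
        (∀ x, (∀ y, B x y = 0) → x = 0) ∧ RicciFlat B ∧ IsSignature B p q) :=
  ricci_flat_diagonal_631_6_general e h01 h02 h14 h23 hzero
end

section
/- For every real number λ with λ ≠ 0 and λ ≠ 1, let 𝔤_λ be the 7-dimensional real nilpotent Lie algebra with basis e_1,…,e_7 whose only nonzero brackets among basis vectors are [e_1,e_2] = (1−λ)·e_3, [e_1,e_3] = e_4, [e_1,e_4] = λ·e_5, [e_2,e_3] = e_5, [e_1,e_5] = e_6, [e_2,e_4] = e_6, [e_1,e_6] = e_7, [e_2,e_5] = e_7, [e_3,e_4] = e_7 (this bracket satisfies the Jacobi identity for every λ). Then no diagonal metric on 𝔤_λ is Ricci-flat: for all nonzero real numbers g_1,…,g_7, the metric making the basis orthogonal with ⟨e_i,e_i⟩ = g_i has nonvanishing Ricci tensor. -/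
/-!
For a metric making a basis `e` orthogonal, `⟨e i, e i⟩ = g i`, with structure constants
`c i j k = e.repr ⁅e i, e j⁆ k`, the Ricci-flat equation at `e a` reads
`∑ i j, c i j a ^ 2 * g a / (g i * g j) = 2 * ∑ i k, c a i k ^ 2 * g k / (g a * g i)`.
Index the basis from `0` as in the code and add these equations over `a ∈ S = {3, …, 6}`: the
term of `c i j k` enters with weight `[k ∈ S] - [i ∈ S] - [j ∈ S]`, and since `S` spans an
abelian ideal this vanishes except for `⁅e 0, e 2⁆ = e 3` and `⁅e 1, e 2⁆ = e 4`, leaving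
`g 3 / (g 0 * g 2) + g 4 / (g 1 * g 2) = 0`. The equation at `e 5` says
`g 5 / (g 0 * g 4) + g 5 / (g 1 * g 3) = g 6 / (g 0 * g 5)`, whose left side is
`g 2 * g 5 / (g 3 * g 4)` times the previous one, so `g 6 = 0`.
-/

theorem LinearMap.BilinForm.apply_eq_sum_of_diagonal {R M ι : Type*} [CommRing R]
    [AddCommGroup M] [Module R M] [Fintype ι] [DecidableEq ι] {B : LinearMap.BilinForm R M}
    {e : Module.Basis ι R M} {g : ι → R} (hB : ∀ i j, B (e i) (e j) = if i = j then g i else 0)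
    (x y : M) :
    B x y = ∑ k, e.repr x k * e.repr y k * g k := by
  have hdiag : LinearMap.BilinForm.toMatrix e B = Matrix.diagonal g := by
    ext i j
    simp [hB, Matrix.diagonal_apply]
  rw [LinearMap.BilinForm.apply_eq_dotProduct_toMatrix_mulVec e, hdiag]
  simp only [dotProduct, Matrix.mulVec_diagonal]
  exact Finset.sum_congr rfl fun k _ => by ring

theorem LinearMap.BilinForm.apply_basis_right_of_diagonal {R M ι : Type*} [CommRing R]
    [AddCommGroup M] [Module R M] [Fintype ι] [DecidableEq ι] {B : LinearMap.BilinForm R M}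
    {e : Module.Basis ι R M} {g : ι → R} (hB : ∀ i j, B (e i) (e j) = if i = j then g i else 0)
    (x : M) (a : ι) :
    B x (e a) = e.repr x a * g a := by
  simp [LinearMap.BilinForm.apply_eq_sum_of_diagonal hB, Finsupp.single_apply]

theorem isDualPair_inv_smul {L : Type} [LieRing L] [LieAlgebra ℝ L] {ι : Type} [Fintype ι]
    [DecidableEq ι] {B : LinearMap.BilinForm ℝ L} {v : ι → L} {g : ι → ℝ}
    (hB : ∀ i j, B (v i) (v j) = if i = j then g i else 0) (hg : ∀ i, g i ≠ 0) :
    IsDualPair B v (fun i => (g i)⁻¹ • v i) := by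
  intro i j
  rw [map_smul, smul_eq_mul, hB]
  split_ifs with h
  · subst h
    exact inv_mul_cancel₀ (hg i)
  · exact mul_zero _

theorem ricci_basis_self_of_diagonal {L : Type} [LieRing L] [LieAlgebra ℝ L] {ι : Type}
    [Fintype ι] [DecidableEq ι] {B : LinearMap.BilinForm ℝ L} {e : Module.Basis ι ℝ L}
    {g : ι → ℝ} (hB : ∀ i j, B (e i) (e j) = if i = j then g i else 0) (hg : ∀ i, g i ≠ 0)
    (a : ι) :
    ricci B e (fun i => (g i)⁻¹ • e i) (e a) (e a) =
      g a * ((1 / 4) * ∑ i, ∑ j, e.repr ⁅e i, e j⁆ a ^ 2 * g a / (g i * g j)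
        - (1 / 2) * ∑ i, ∑ k, e.repr ⁅e a, e i⁆ k ^ 2 * g k / (g a * g i)) := by
  have hout : ∑ i, B ⁅e a, e i⁆ ⁅e a, (g i)⁻¹ • e i⁆
      = g a * ∑ i, ∑ k, e.repr ⁅e a, e i⁆ k ^ 2 * g k / (g a * g i) := by
    simp only [Finset.mul_sum, lie_smul, map_smul, smul_eq_mul,
      LinearMap.BilinForm.apply_eq_sum_of_diagonal hB, Finsupp.smul_apply]
    refine Finset.sum_congr rfl fun i _ => Finset.sum_congr rfl fun k _ => ?_
    field_simp [hg a, hg i]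
  have hin : ∑ i, ∑ j, B ⁅e i, e j⁆ (e a) * B ⁅(g i)⁻¹ • e i, (g j)⁻¹ • e j⁆ (e a)
      = g a * ∑ i, ∑ j, e.repr ⁅e i, e j⁆ a ^ 2 * g a / (g i * g j) := by
    simp only [Finset.mul_sum, lie_smul, smul_lie, map_smul, LinearMap.smul_apply, smul_eq_mul,
      LinearMap.BilinForm.apply_basis_right_of_diagonal hB]
    refine Finset.sum_congr rfl fun i _ => Finset.sum_congr rfl fun j _ => ?_
    field_simp [hg i, hg j]
  rw [ricci, hout, hin]
  ring

theorem RicciFlat.sum_sq_repr_lie_eq {L : Type} [LieRing L] [LieAlgebra ℝ L] {ι : Type}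
    [Fintype ι] [DecidableEq ι] {B : LinearMap.BilinForm ℝ L} (hflat : RicciFlat B)
    {e : Module.Basis ι ℝ L} {g : ι → ℝ} (hB : ∀ i j, B (e i) (e j) = if i = j then g i else 0)
    (hg : ∀ i, g i ≠ 0) (a : ι) :
    ∑ i, ∑ j, e.repr ⁅e i, e j⁆ a ^ 2 * g a / (g i * g j)
      = 2 * ∑ i, ∑ k, e.repr ⁅e a, e i⁆ k ^ 2 * g k / (g a * g i) := by
  have h := hflat ι e _ (isDualPair_inv_smul hB hg) (e a) (e a)
  rw [ricci_basis_self_of_diagonal hB hg, mul_eq_zero] at h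
  linear_combination 4 * h.resolve_left (hg a)

theorem no_diagonal_ricci_flat_754321_9_general {L : Type} [LieRing L] [LieAlgebra ℝ L]
    (lam : ℝ)
    (e : Module.Basis (Fin 7) ℝ L)
    (h01 : ⁅e 0, e 1⁆ = (1 - lam) • e 2) (h02 : ⁅e 0, e 2⁆ = e 3)
    (h03 : ⁅e 0, e 3⁆ = lam • e 4) (h12 : ⁅e 1, e 2⁆ = e 4)
    (h04 : ⁅e 0, e 4⁆ = e 5) (h13 : ⁅e 1, e 3⁆ = e 5)
    (h05 : ⁅e 0, e 5⁆ = e 6) (h14 : ⁅e 1, e 4⁆ = e 6) (h23 : ⁅e 2, e 3⁆ = e 6)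
    (hzero : ∀ i j : Fin 7,
      (i, j) ∉ ([(0, 1), (0, 2), (0, 3), (1, 2), (0, 4), (1, 3), (0, 5), (1, 4),
        (2, 3)] : List (Fin 7 × Fin 7)) →
      (j, i) ∉ ([(0, 1), (0, 2), (0, 3), (1, 2), (0, 4), (1, 3), (0, 5), (1, 4),
        (2, 3)] : List (Fin 7 × Fin 7)) →
      ⁅e i, e j⁆ = 0) :
    ∀ g : Fin 7 → ℝ, (∀ i, g i ≠ 0) →
      ∀ B : LinearMap.BilinForm ℝ L,
        (∀ i j, B (e i) (e j) = if i = j then g i else 0) →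
        ¬ RicciFlat B := by
  intro g hg B hB hflat
  -- oriented by `j < i` so that it can be a simp rule without looping
  have skew : ∀ i j : Fin 7, j < i → ⁅e i, e j⁆ = -⁅e j, e i⁆ :=
    fun i j _ => (lie_skew _ _).symm
  have b3 := hflat.sum_sq_repr_lie_eq hB hg 3
  have b4 := hflat.sum_sq_repr_lie_eq hB hg 4
  have b5 := hflat.sum_sq_repr_lie_eq hB hg 5
  have b6 := hflat.sum_sq_repr_lie_eq hB hg 6
  simp only [Fin.isValue, Fin.sum_univ_seven, List.mem_cons, Prod.mk.injEq, zero_ne_one,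
    and_false, Fin.reduceEq, List.not_mem_nil, or_self, not_false_eq_true, false_and, hzero,
    map_zero, Finsupp.coe_zero, Pi.zero_apply, ne_eq, OfNat.ofNat_ne_zero, zero_pow, zero_mul,
    zero_div, add_zero, h01, map_smul, Module.Basis.repr_self, Finsupp.smul_single,
    smul_eq_mul, mul_one, Finsupp.single_sub, Finsupp.coe_sub, Pi.sub_apply,
    Finsupp.single_eq_of_ne, sub_self, h02, Finsupp.single_eq_same, one_pow, one_mul, zero_add,
    h03, h04, h05, zero_lt_one, skew, map_neg, neg_sub, h12, h13, h14, one_ne_zero, and_self,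
    and_true, Fin.reduceLT, Finsupp.coe_neg, Pi.neg_apply, even_two, Even.neg_pow, neg_zero, h23,
    Finset.sum_const_zero, mul_zero] at b3 b4 b5 b6
  have hideal : g 3 / (g 0 * g 2) + g 4 / (g 1 * g 2) = 0 := by
    linear_combination (b3 + b4 + b5 + b6) / 2
  have hsplit : g 5 / (g 0 * g 4) + g 5 / (g 1 * g 3)
      = g 2 * g 5 / (g 3 * g 4) * (g 3 / (g 0 * g 2) + g 4 / (g 1 * g 2)) := by
    field_simp [hg 0, hg 1, hg 2, hg 3, hg 4]
  have h6 : g 6 / (g 0 * g 5) = 0 := by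
    linear_combination -b5 / 2 + hsplit + g 2 * g 5 / (g 3 * g 4) * hideal
  exact div_ne_zero (hg 6) (mul_ne_zero (hg 0) (hg 5)) h6

/-- The 7-dimensional nilpotent Lie algebra `754321:9` admits no diagonal Ricci-flat
metric. -/
theorem no_diagonal_ricci_flat_754321_9 {L : Type} [LieRing L] [LieAlgebra ℝ L]
    [LieRing.IsNilpotent L] (lam : ℝ) (hlam0 : lam ≠ 0) (hlam1 : lam ≠ 1)
    (e : Module.Basis (Fin 7) ℝ L)
    (h01 : ⁅e 0, e 1⁆ = (1 - lam) • e 2) (h02 : ⁅e 0, e 2⁆ = e 3)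
    (h03 : ⁅e 0, e 3⁆ = lam • e 4) (h12 : ⁅e 1, e 2⁆ = e 4)
    (h04 : ⁅e 0, e 4⁆ = e 5) (h13 : ⁅e 1, e 3⁆ = e 5)
    (h05 : ⁅e 0, e 5⁆ = e 6) (h14 : ⁅e 1, e 4⁆ = e 6) (h23 : ⁅e 2, e 3⁆ = e 6)
    (hzero : ∀ i j : Fin 7,
      (i, j) ∉ ([(0, 1), (0, 2), (0, 3), (1, 2), (0, 4), (1, 3), (0, 5), (1, 4),
        (2, 3)] : List (Fin 7 × Fin 7)) →
      (j, i) ∉ ([(0, 1), (0, 2), (0, 3), (1, 2), (0, 4), (1, 3), (0, 5), (1, 4),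
        (2, 3)] : List (Fin 7 × Fin 7)) →
      ⁅e i, e j⁆ = 0) :
    ∀ g : Fin 7 → ℝ, (∀ i, g i ≠ 0) →
      ∀ B : LinearMap.BilinForm ℝ L,
        (∀ i j, B (e i) (e j) = if i = j then g i else 0) →
        ¬ RicciFlat B :=
  no_diagonal_ricci_flat_754321_9_general lam e h01 h02 h03 h12 h04 h13 h05 h14 h23 hzero
end
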